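/- arXiv:2602.05410 — 3 statements merged into one kernel-verified Lean document; each statement's English description precedes it below -/
import Mathlib

section
/- Let F be L-smooth and μ-strongly convex with minimizer value F*, let η ≤ 1/(2L), and suppose at each round the update satisfies θ^{t+1} = θ^t − η∇F(θ^t) + e_t where the error e_t satisfies E[‖e_t‖ | θ^t] ≤ E₁ and E[‖e_t‖² | θ^t] ≤ E₂, and ‖∇F(θ^t)‖ ≤ C_g. Then E[F(θ^{t+1}) − F*] ≤ (1 − ημ) E[F(θ^t) − F*] + C_g E₁ + 2L E₂. -/
/-!
For every realisation of the error, the descent lemma applied to `θ - η ∇F(θ) + e` with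
`L η ≤ 1/2` gives `F(θ') ≤ F(θ) - η/2 ‖∇F(θ)‖² + ⟪∇F(θ), e⟫ + L ‖e‖²`. Cauchy–Schwarz and the
Polyak–Łojasiewicz inequality `2 μ (F(θ) - F*) ≤ ‖∇F(θ)‖²`, a consequence of strong convexity,
turn this into a bound affine in `‖e‖` and `‖e‖²`, which is then integrated.
-/

open MeasureTheory InnerProductSpace

section InnerProductSpace

variable {E : Type*} [NormedAddCommGroup E] [InnerProductSpace ℝ E] {F : E → ℝ} {F' : E → E}

theorem norm_sub_smul_sq_le (η : ℝ) (e g : E) :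
    ‖e - η • g‖ ^ 2 ≤ 2 * ‖e‖ ^ 2 + 2 * η ^ 2 * ‖g‖ ^ 2 := by
  have := parallelogram_law_with_norm ℝ e (η • g)
  rw [norm_smul, Real.norm_eq_abs, mul_pow, sq_abs] at this
  nlinarith [sq_nonneg ‖e + η • g‖]

theorem two_mul_sub_le_norm_sq_of_strongly_convex {μ : ℝ} (hμ : 0 ≤ μ)
    (hsc : ∀ x y, F y ≥ F x + ⟪F' x, y - x⟫_ℝ + μ / 2 * ‖y - x‖ ^ 2) (x y : E) :
    2 * μ * (F x - F y) ≤ ‖F' x‖ ^ 2 := by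
  have hCS : -(‖F' x‖ * ‖y - x‖) ≤ ⟪F' x, y - x⟫_ℝ :=
    neg_le_of_abs_le (abs_real_inner_le_norm _ _)
  nlinarith [hsc x y, sq_nonneg (‖F' x‖ - μ * ‖y - x‖)]

section Smooth

variable [CompleteSpace E] {L : ℝ}

theorem HasGradientAt.hasDerivAt_comp_add_smul {x v : E} {t : ℝ}
    (h : HasGradientAt F (F' (x + t • v)) (x + t • v)) :
    HasDerivAt (fun s : ℝ => F (x + s • v)) ⟪F' (x + t • v), v⟫_ℝ t := by
  have hline : HasDerivAt (fun s : ℝ => x + s • v) v t := by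
    simpa using ((hasDerivAt_id t).smul_const v).const_add x
  have := h.hasFDerivAt.comp_hasDerivAt t hline
  rw [toDual_apply_apply] at this
  exact this

theorem le_add_inner_add_sq_of_lipschitz_gradient (hgrad : ∀ x, HasGradientAt F (F' x) x)
    (hlip : ∀ x y, ‖F' x - F' y‖ ≤ L * ‖x - y‖) (x y : E) :
    F y ≤ F x + ⟪F' x, y - x⟫_ℝ + L / 2 * ‖y - x‖ ^ 2 := by
  set v := y - x
  -- `F` on the segment minus its quadratic model: antitone on `[0, 1]`, so `φ 1 ≤ φ 0`.
  set φ : ℝ → ℝ := fun t => F (x + t • v) - t * ⟪F' x, v⟫_ℝ - L / 2 * t ^ 2 * ‖v‖ ^ 2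
  have hφ : ∀ t, HasDerivAt φ (⟪F' (x + t • v), v⟫_ℝ - ⟪F' x, v⟫_ℝ - L * t * ‖v‖ ^ 2) t := by
    intro t
    refine ((((hgrad _).hasDerivAt_comp_add_smul).sub ((hasDerivAt_id t).mul_const _)).sub
      (((hasDerivAt_pow 2 t).const_mul (L / 2)).mul_const (‖v‖ ^ 2))).congr_deriv ?_
    simp only [Nat.cast_ofNat]
    ring
  have hφ' : ∀ t ∈ interior (Set.Icc (0 : ℝ) 1),
      ⟪F' (x + t • v), v⟫_ℝ - ⟪F' x, v⟫_ℝ - L * t * ‖v‖ ^ 2 ≤ 0 := by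
    intro t ht
    rw [interior_Icc] at ht
    have hCS : ⟪F' (x + t • v) - F' x, v⟫_ℝ ≤ ‖F' (x + t • v) - F' x‖ * ‖v‖ :=
      real_inner_le_norm _ _
    have hL : ‖F' (x + t • v) - F' x‖ ≤ L * (t * ‖v‖) := by
      simpa [norm_smul, abs_of_pos ht.1] using hlip (x + t • v) x
    rw [inner_sub_left] at hCS
    nlinarith [mul_le_mul_of_nonneg_right hL (norm_nonneg v)]
  have hanti := antitoneOn_of_hasDerivWithinAt_nonpos (convex_Icc 0 1)
    (fun t _ => (hφ t).continuousAt.continuousWithinAt) (fun t _ => (hφ t).hasDerivWithinAt) hφ'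
  have := hanti (Set.left_mem_Icc.2 zero_le_one) (Set.right_mem_Icc.2 zero_le_one) zero_le_one
  simp only [φ, v, zero_smul, add_zero, one_smul, add_sub_cancel, zero_mul, sub_zero, one_mul,
    one_pow, mul_one, ne_eq, OfNat.ofNat_ne_zero, not_false_eq_true, zero_pow] at this
  linarith

theorem perturbed_gradient_step_le (hgrad : ∀ x, HasGradientAt F (F' x) x)
    (hlip : ∀ x y, ‖F' x - F' y‖ ≤ L * ‖x - y‖) (hL : 0 ≤ L) {η : ℝ} (hη : 0 ≤ η)
    (hLη : L * η ≤ 1 / 2) (x e : E) :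
    F (x - η • F' x + e) ≤ F x - η / 2 * ‖F' x‖ ^ 2 + ⟪F' x, e⟫_ℝ + L * ‖e‖ ^ 2 := by
  have hdescent := le_add_inner_add_sq_of_lipschitz_gradient hgrad hlip x (x - η • F' x + e)
  have hdisp : x - η • F' x + e - x = e - η • F' x := by abel
  rw [hdisp, inner_sub_right, real_inner_smul_right, real_inner_self_eq_norm_sq] at hdescent
  have hsq :=
    mul_le_mul_of_nonneg_left (norm_sub_smul_sq_le η e (F' x)) (by positivity : 0 ≤ L / 2)
  have hstep : L * η * (η * ‖F' x‖ ^ 2) ≤ 1 / 2 * (η * ‖F' x‖ ^ 2) :=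
    mul_le_mul_of_nonneg_right hLη (by positivity)
  nlinarith

end Smooth

end InnerProductSpace

theorem integral_le_add_mul_integral_add_mul_integral {Ω : Type*} [MeasurableSpace Ω]
    {P : Measure Ω} [IsProbabilityMeasure P] {f u v : Ω → ℝ} {a b c : ℝ}
    (hf : Integrable f P) (hu : Integrable u P) (hv : Integrable v P)
    (h : ∀ ω, f ω ≤ a + b * u ω + c * v ω) :
    ∫ ω, f ω ∂P ≤ a + b * ∫ ω, u ω ∂P + c * ∫ ω, v ω ∂P := by
  have hau : Integrable (fun ω => a + b * u ω) P := (integrable_const a).add (hu.const_mul b)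
  calc ∫ ω, f ω ∂P ≤ ∫ ω, a + b * u ω + c * v ω ∂P :=
        integral_mono hf (hau.add (hv.const_mul c)) h
    _ = a + b * ∫ ω, u ω ∂P + c * ∫ ω, v ω ∂P := by
      rw [integral_add hau (hv.const_mul c), integral_add (integrable_const a) (hu.const_mul b),
        integral_const, integral_const_mul, integral_const_mul, probReal_univ, one_smul]

theorem one_round_descent_general
    {Ω : Type*} [MeasurableSpace Ω] (μP : Measure Ω) [IsProbabilityMeasure μP]
    {d : ℕ} (F : EuclideanSpace ℝ (Fin d) → ℝ)
    (F' : EuclideanSpace ℝ (Fin d) → EuclideanSpace ℝ (Fin d))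
    (L μc η Cg E₁ E₂ Fstar : ℝ)
    (hL : 0 < L) (hμc : 0 < μc) (hη0 : 0 < η) (hη : η ≤ 1 / (2 * L))
    (hgrad : ∀ θ, HasGradientAt F (F' θ) θ)
    (hlip : ∀ x y, ‖F' x - F' y‖ ≤ L * ‖x - y‖)
    (hsc : ∀ x y, F y ≥ F x + (inner ℝ (F' x) (y - x) : ℝ) + μc / 2 * ‖y - x‖ ^ 2)
    (θstar : EuclideanSpace ℝ (Fin d))
    (hFstar : F θstar = Fstar)
    (θ : EuclideanSpace ℝ (Fin d)) (hCg : ‖F' θ‖ ≤ Cg)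
    (e : Ω → EuclideanSpace ℝ (Fin d))
    (θ' : Ω → EuclideanSpace ℝ (Fin d))
    (hstep : ∀ ω, θ' ω = θ - η • F' θ + e ω)
    (hInt1 : Integrable (fun ω => ‖e ω‖) μP)
    (hInt2 : Integrable (fun ω => ‖e ω‖ ^ 2) μP)
    (hIntF : Integrable (fun ω => F (θ' ω)) μP)
    (hE₁ : ∫ ω, ‖e ω‖ ∂μP ≤ E₁)
    (hE₂ : ∫ ω, ‖e ω‖ ^ 2 ∂μP ≤ E₂) :
    (∫ ω, F (θ' ω) ∂μP) - Fstar ≤ (1 - η * μc) * (F θ - Fstar) + Cg * E₁ + 2 * L * E₂ := by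
  have hLη : L * η ≤ 1 / 2 := by
    rw [le_div_iff₀ (by positivity)] at hη
    linarith
  have hPL := two_mul_sub_le_norm_sq_of_strongly_convex hμc.le hsc θ θstar
  rw [hFstar] at hPL
  have hpointwise (ω : Ω) :
      F (θ' ω) ≤ ((1 - η * μc) * (F θ - Fstar) + Fstar) + Cg * ‖e ω‖ + L * ‖e ω‖ ^ 2 := by
    have hCS : ⟪F' θ, e ω⟫_ℝ ≤ Cg * ‖e ω‖ :=
      (real_inner_le_norm _ _).trans (mul_le_mul_of_nonneg_right hCg (norm_nonneg _))
    have hdescent := perturbed_gradient_step_le hgrad hlip hL.le hη0.le hLη θ (e ω)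
    rw [← hstep] at hdescent
    linarith [mul_le_mul_of_nonneg_left hPL (by positivity : 0 ≤ η / 2)]
  have hmean := integral_le_add_mul_integral_add_mul_integral hIntF hInt1 hInt2 hpointwise
  have hCg0 : 0 ≤ Cg := (norm_nonneg _).trans hCg
  have hE₂0 : 0 ≤ E₂ := (integral_nonneg fun ω => sq_nonneg ‖e ω‖).trans hE₂
  linarith [mul_le_mul_of_nonneg_left hE₁ hCg0, mul_le_mul_of_nonneg_left hE₂ hL.le,
    mul_nonneg hL.le hE₂0]

theorem one_round_descent
    {Ω : Type*} [MeasurableSpace Ω] (μP : Measure Ω) [IsProbabilityMeasure μP]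
    {d : ℕ} (F : EuclideanSpace ℝ (Fin d) → ℝ)
    (F' : EuclideanSpace ℝ (Fin d) → EuclideanSpace ℝ (Fin d))
    (L μc η Cg E₁ E₂ Fstar : ℝ)
    (hL : 0 < L) (hμc : 0 < μc) (hη0 : 0 < η) (hη : η ≤ 1 / (2 * L))
    (hgrad : ∀ θ, HasGradientAt F (F' θ) θ)
    (hlip : ∀ x y, ‖F' x - F' y‖ ≤ L * ‖x - y‖)
    (hsc : ∀ x y, F y ≥ F x + (inner ℝ (F' x) (y - x) : ℝ) + μc / 2 * ‖y - x‖ ^ 2)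
    (θstar : EuclideanSpace ℝ (Fin d)) (hmin : ∀ θ, F θstar ≤ F θ)
    (hFstar : F θstar = Fstar)
    (θ : EuclideanSpace ℝ (Fin d)) (hCg : ‖F' θ‖ ≤ Cg)
    (e : Ω → EuclideanSpace ℝ (Fin d))
    (θ' : Ω → EuclideanSpace ℝ (Fin d))
    (hstep : ∀ ω, θ' ω = θ - η • F' θ + e ω)
    (hInt1 : Integrable (fun ω => ‖e ω‖) μP)
    (hInt2 : Integrable (fun ω => ‖e ω‖ ^ 2) μP)
    (hIntF : Integrable (fun ω => F (θ' ω)) μP)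
    (hE₁ : ∫ ω, ‖e ω‖ ∂μP ≤ E₁)
    (hE₂ : ∫ ω, ‖e ω‖ ^ 2 ∂μP ≤ E₂) :
    (∫ ω, F (θ' ω) ∂μP) - Fstar ≤ (1 - η * μc) * (F θ - Fstar) + Cg * E₁ + 2 * L * E₂ :=
  one_round_descent_general μP F F' L μc η Cg E₁ E₂ Fstar hL hμc hη0 hη hgrad hlip hsc θstar hFstar
    θ hCg e θ' hstep hInt1 hInt2 hIntF hE₁ hE₂
end

section
/- Let v ∈ ℝ^m with m = 2^r. Define the sequence of vectors w_0 = v and w_{j+1}(i) = w_j(i) + w_j((i + 2^j) mod m) for all i. Then after r steps, every coordinate of w_r equals the total sum Σ_{i=0}^{m−1} v(i). -/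
lemma sum_range_castZMod (m : ℕ) [NeZero m] (f : ZMod m → ℝ) :
    ∑ t ∈ Finset.range m, f (t : ZMod m) = ∑ k : ZMod m, f k := by
  refine Finset.sum_nbij' (fun t => (t : ZMod m)) (fun k => k.val) ?_ ?_ ?_ ?_ ?_ <;>
    simp +contextual [ZMod.val_lt, ZMod.val_cast_of_lt, ZMod.natCast_val,
      ZMod.natCast_rightInverse.injective.eq_iff, Nat.mod_eq_of_lt]

theorem totalSum_correct
    (r m : ℕ) [NeZero m] (hm : m = 2 ^ r)
    (v : ZMod m → ℝ) (w : ℕ → ZMod m → ℝ)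
    (h0 : w 0 = v)
    (hstep : ∀ j i, w (j + 1) i = w j i + w j (i + (2 ^ j : ZMod m))) :
    ∀ i, w r i = ∑ k, v k := by
  have key : ∀ j i, w j i = ∑ t ∈ Finset.range (2 ^ j), v (i + (t : ZMod m)) := by
    intro j
    induction j with
    | zero => intro i; simp [h0]
    | succ j ih =>
      intro i
      rw [hstep, ih, ih, pow_succ, mul_two, ← Finset.sum_range_add_sum_Ico _
        (Nat.le_add_right (2 ^ j) (2 ^ j))]
      congr 1
      rw [Finset.sum_Ico_eq_sum_range]
      simp only [Nat.add_sub_cancel_left]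
      apply Finset.sum_congr rfl
      intro t _
      push_cast
      ring_nf
  intro i
  rw [key, ← hm, sum_range_castZMod m (fun t => v (i + t)),
    ← Equiv.sum_comp (Equiv.addLeft i) v]
  simp [Equiv.addLeft]
end

section
/- Let A be an n×n matrix and v ∈ ℝ^n. For k = 0,…,n−1 define the generalized diagonal d_k ∈ ℝ^n by d_k(i) = A(i, (i+k) mod n), and the rotation rot_k(v)(i) = v((i+k) mod n). Then Σ_{k=0}^{n−1} d_k ⊙ rot_k(v) = A·v, where ⊙ denotes component-wise product. -/
theorem diagonal_method_correct
    (n : ℕ) [NeZero n] (A : ZMod n → ZMod n → ℝ) (v : ZMod n → ℝ) :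
    ∀ i, ∑ k, (A i (i + k)) * v (i + k) = ∑ j, A i j * v j := by
  intro i
  exact Fintype.sum_equiv (Equiv.addLeft i) _ _ (fun k => rfl)
end
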